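/- Let ν be the Gaussian measure on ℝ³ with density (2πσ)^{−3/2} e^{−|x|²/(2σ)}, σ > 0, and let (r_j)_{j∈ℤ³} be independent, each with law ν. Then X₀ ∈ L^p(Ω) for every 1 ≤ p < ∞, but X₀ ∉ L^∞(Ω), i.e. for every N ≥ 1 one has P(X₀ ≥ N) > 0. -/

import Mathlib

open MeasureTheory ProbabilityTheory ENNReal

noncomputable section

/-- `ℝ³` with the Euclidean norm. -/
abbrev E3 := EuclideanSpace ℝ (Fin 3)

/-- The lattice point `j ∈ ℤ³` viewed in `ℝ³`. -/
def latt (j : Fin 3 → ℤ) : E3 := (EuclideanSpace.equiv (Fin 3) ℝ).symm (fun i => (j i : ℝ))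

/-- The semi-open unit cube `W = [-1/2, 1/2)³`. -/
def Wcube : Set E3 := {x | ∀ i, -(1:ℝ)/2 ≤ x i ∧ x i < 1/2}

/-- The number (in `[0,∞]`) of lattice points `j` whose perturbation `j + r_j(ω)` lies in `W`. -/
def X0 {Ω : Type*} (r : (Fin 3 → ℤ) → Ω → E3) (ω : Ω) : ℝ≥0∞ :=
  ({j : Fin 3 → ℤ | latt j + r j ω ∈ Wcube}.encard : ℝ≥0∞)

/-- The Gaussian measure on `ℝ³` with density `(2πσ)^{-3/2} e^{-|x|²/(2σ)}`. -/
def gaussMeasure (σ : ℝ) : Measure E3 :=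
  volume.withDensity
    (fun x => ENNReal.ofReal ((2 * Real.pi * σ) ^ (-(3:ℝ)/2) * Real.exp (-‖x‖ ^ 2 / (2 * σ))))


/-!
`X₀` counts the events `A_j = {r_j ∈ W - j}`. Every point of `W - j` has norm at least `|j|/2`,
so `P(A_j) ≤ C e^{-|j|²/(8σ)} = C w_j^p` with `w_j = e^{-|j|²/(8σp)}`, and the weights `w_j` are
summable over `ℤ³`. Writing `1_{A_j} = w_j · (1_{A_j}/w_j)`, the weighted power-mean inequality
`(∑ w_j f_j)^p ≤ (∑ w_j)^{p-1} ∑ w_j f_j^p` gives `E[X₀^p] ≤ C (∑ w_j)^p < ∞`.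
Conversely, each `A_j` has positive probability since the Gaussian density is positive and
`W - j` has volume one; by independence any `N` of the `A_j` occur together with positive
probability, and then `X₀ ≥ N`.
-/

theorem ENNReal.rpow_tsum_weight_mul_le {ι : Type*} (w f : ι → ℝ≥0∞) {p : ℝ} (hp : 1 ≤ p) :
    (∑' i, w i * f i) ^ p ≤ (∑' i, w i) ^ (p - 1) * ∑' i, w i * f i ^ p := by
  have hp₀ : 0 < p := by linarith
  refine le_of_tendsto' ((ENNReal.continuous_rpow_const.tendsto _).comp ENNReal.summable.hasSum)
    fun s => ?_
  calc (∑ i ∈ s, w i * f i) ^ p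
      ≤ ((∑ i ∈ s, w i) ^ (1 - p⁻¹) * (∑ i ∈ s, w i * f i ^ p) ^ p⁻¹) ^ p :=
        ENNReal.rpow_le_rpow (ENNReal.inner_le_weight_mul_Lp_of_nonneg s hp w f) hp₀.le
    _ = (∑ i ∈ s, w i) ^ (p - 1) * ∑ i ∈ s, w i * f i ^ p := by
        rw [ENNReal.mul_rpow_of_nonneg _ _ hp₀.le, ← ENNReal.rpow_mul, ← ENNReal.rpow_mul,
          inv_mul_cancel₀ hp₀.ne', ENNReal.rpow_one, sub_mul, one_mul, inv_mul_cancel₀ hp₀.ne']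
    _ ≤ (∑' i, w i) ^ (p - 1) * ∑' i, w i * f i ^ p :=
        mul_le_mul' (ENNReal.rpow_le_rpow (ENNReal.sum_le_tsum s) (by linarith))
          (ENNReal.sum_le_tsum s)

theorem lintegral_tsum_indicator_rpow_le {ι Ω : Type*} [Countable ι] [MeasurableSpace Ω]
    (P : Measure Ω) {A : ι → Set Ω} (hA : ∀ i, MeasurableSet (A i)) {w : ι → ℝ≥0∞}
    (hw₀ : ∀ i, w i ≠ 0) (hw_top : ∀ i, w i ≠ ⊤) {p : ℝ} (hp : 1 ≤ p) {C : ℝ≥0∞}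
    (hPA : ∀ i, P (A i) ≤ C * w i ^ p) :
    ∫⁻ ω, (∑' i, (A i).indicator 1 ω) ^ p ∂P ≤ C * (∑' i, w i) ^ p := by
  have hp₀ : 0 < p := by linarith
  set b : ι → Ω → ℝ≥0∞ := fun i => (A i).indicator fun _ => (w i)⁻¹
  have hb : ∀ i ω, (A i).indicator 1 ω = w i * b i ω := fun i ω => by
    rw [← Set.indicator_const_mul, ENNReal.mul_inv_cancel (hw₀ i) (hw_top i)]
    rfl
  have hb_pow : ∀ i, (fun ω => b i ω ^ p) = (A i).indicator fun _ => (w i)⁻¹ ^ p := fun i => by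
    ext ω
    by_cases hω : ω ∈ A i <;> simp [b, hω, hp₀]
  have hterm : ∀ i, w i * ((w i)⁻¹ ^ p * P (A i)) ≤ C * w i := fun i => by
    have hwp : w i ^ p ≠ 0 := (ENNReal.rpow_pos (pos_iff_ne_zero.2 (hw₀ i)) (hw_top i)).ne'
    calc w i * ((w i)⁻¹ ^ p * P (A i)) ≤ w i * ((w i ^ p)⁻¹ * (C * w i ^ p)) := by
          rw [ENNReal.inv_rpow]; gcongr; exact hPA i
      _ = C * w i * ((w i ^ p)⁻¹ * w i ^ p) := by ring
      _ = C * w i := by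
          rw [ENNReal.inv_mul_cancel hwp (ENNReal.rpow_ne_top_of_nonneg hp₀.le (hw_top i)),
            mul_one]
  have hb_meas : ∀ i, Measurable (b i) := fun i => measurable_const.indicator (hA i)
  calc ∫⁻ ω, (∑' i, (A i).indicator 1 ω) ^ p ∂P
      = ∫⁻ ω, (∑' i, w i * b i ω) ^ p ∂P := by simp_rw [hb]
    _ ≤ ∫⁻ ω, (∑' i, w i) ^ (p - 1) * ∑' i, w i * b i ω ^ p ∂P :=
        lintegral_mono fun ω => ENNReal.rpow_tsum_weight_mul_le _ _ hp
    _ = (∑' i, w i) ^ (p - 1) * ∑' i, w i * ((w i)⁻¹ ^ p * P (A i)) := by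
        rw [lintegral_const_mul _ (Measurable.tsum fun i =>
            ((hb_meas i).pow_const p).const_mul _),
          lintegral_tsum fun i => (((hb_meas i).pow_const p).const_mul _).aemeasurable]
        congr 1
        refine tsum_congr fun i => ?_
        rw [lintegral_const_mul _ ((hb_meas i).pow_const p), hb_pow,
          lintegral_indicator_const (hA i)]
    _ ≤ (∑' i, w i) ^ (p - 1) * ∑' i, C * w i :=
        mul_le_mul_right (ENNReal.tsum_le_tsum hterm) _
    _ = C * (∑' i, w i) ^ p := by
        rw [ENNReal.tsum_mul_left, mul_left_comm]
        conv_rhs => rw [show p = (p - 1) + 1 by ring,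
          ENNReal.rpow_add_of_nonneg _ _ (by linarith) zero_le_one, ENNReal.rpow_one]

theorem ENNReal.tsum_pi_prod {α : Type*} (f : α → ℝ≥0∞) (d : ℕ) :
    ∑' j : Fin d → α, ∏ i, f (j i) = (∑' a, f a) ^ d := by
  induction d with
  | zero => simp
  | succ d ih =>
    rw [← (Fin.consEquiv fun _ => α).tsum_eq, ENNReal.tsum_prod', pow_succ']
    simp only [Fin.consEquiv, Equiv.coe_fn_mk, Fin.prod_univ_succ, Fin.cons_zero, Fin.cons_succ,
      ENNReal.tsum_mul_left, ih, ENNReal.tsum_mul_right]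

theorem summable_exp_neg_mul_int_sq {c : ℝ} (hc : 0 < c) :
    Summable fun k : ℤ => Real.exp (-c * (k : ℝ) ^ 2) := by
  have hnat : Summable fun n : ℕ => Real.exp (-c * (n : ℝ) ^ 2) :=
    Real.summable_exp_nat_mul_of_ge (neg_lt_zero.2 hc) fun n => by
      exact_mod_cast Nat.le_self_pow two_ne_zero n
  exact .of_nat_of_neg (by simpa using hnat) (by simpa using hnat)

theorem tsum_exp_neg_mul_sum_sq_ne_top {c : ℝ} (hc : 0 < c) (d : ℕ) :
    ∑' j : Fin d → ℤ, ENNReal.ofReal (Real.exp (-c * ∑ i, (j i : ℝ) ^ 2)) ≠ ⊤ := by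
  simp_rw [Finset.mul_sum, Real.exp_sum,
    ENNReal.ofReal_prod_of_nonneg fun _ _ => (Real.exp_pos _).le]
  rw [ENNReal.tsum_pi_prod (fun k : ℤ => ENNReal.ofReal (Real.exp (-c * (k : ℝ) ^ 2))),
    ← ENNReal.ofReal_tsum_of_nonneg (fun _ => (Real.exp_pos _).le) (summable_exp_neg_mul_int_sq hc)]
  exact ENNReal.pow_ne_top ENNReal.ofReal_ne_top

theorem intCast_sq_le_four_mul_sq {k : ℤ} {y : ℝ}
    (h : (k : ℝ) + y ∈ Set.Ico (-(1 : ℝ) / 2) (1 / 2)) : (k : ℝ) ^ 2 ≤ 4 * y ^ 2 := by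
  obtain ⟨h₁, h₂⟩ := h
  rcases lt_trichotomy k 0 with hk | rfl | hk
  · have hk' : (k : ℝ) ≤ -1 := by exact_mod_cast Int.le_sub_one_iff.2 hk
    nlinarith
  · norm_num
    positivity
  · have hk' : (1 : ℝ) ≤ k := by exact_mod_cast hk
    nlinarith

theorem norm_latt_sq_eq (j : Fin 3 → ℤ) : ‖latt j‖ ^ 2 = ∑ i, (j i : ℝ) ^ 2 := by
  simp [EuclideanSpace.real_norm_sq_eq, latt]

theorem Wcube_eq_preimage_pi : Wcube = (MeasurableEquiv.toLp 2 (Fin 3 → ℝ)).symm ⁻¹'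
    Set.univ.pi fun _ => Set.Ico (-(1:ℝ)/2) (1/2) := by
  ext x
  simp [Wcube, Set.mem_pi]

theorem measurableSet_Wcube : MeasurableSet Wcube := by
  rw [Wcube_eq_preimage_pi]
  exact MeasurableEquiv.measurable _ (MeasurableSet.univ_pi fun _ => measurableSet_Ico)

theorem volume_Wcube : volume Wcube = 1 := by
  rw [Wcube_eq_preimage_pi,
    (EuclideanSpace.volume_preserving_symm_measurableEquiv_toLp (Fin 3)).measure_preimage
      (MeasurableSet.univ_pi fun _ => measurableSet_Ico).nullMeasurableSet, volume_pi_pi]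
  norm_num

def perturbCube (j : Fin 3 → ℤ) : Set E3 := (latt j + ·) ⁻¹' Wcube

theorem measurableSet_perturbCube (j : Fin 3 → ℤ) : MeasurableSet (perturbCube j) :=
  measurable_const_add (latt j) measurableSet_Wcube

theorem volume_perturbCube (j : Fin 3 → ℤ) : volume (perturbCube j) = 1 := by
  rw [perturbCube, measure_preimage_add, volume_Wcube]

theorem norm_latt_sq_le_of_mem_perturbCube {j : Fin 3 → ℤ} {y : E3} (hy : y ∈ perturbCube j) :
    ‖latt j‖ ^ 2 ≤ 4 * ‖y‖ ^ 2 := by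
  rw [norm_latt_sq_eq, EuclideanSpace.real_norm_sq_eq, Finset.mul_sum]
  exact Finset.sum_le_sum fun i _ => intCast_sq_le_four_mul_sq (hy i)

theorem gaussMeasure_le_of_le_norm_sq {σ : ℝ} (hσ : 0 < σ) {s : Set E3} (hs : MeasurableSet s)
    {R : ℝ} (hR : ∀ y ∈ s, R ≤ ‖y‖ ^ 2) :
    gaussMeasure σ s ≤
      ENNReal.ofReal ((2 * Real.pi * σ) ^ (-(3:ℝ)/2) * Real.exp (-R / (2 * σ))) * volume s := by
  rw [gaussMeasure, withDensity_apply _ hs, ← setLIntegral_const]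
  refine setLIntegral_mono measurable_const fun y hy => ENNReal.ofReal_le_ofReal ?_
  gcongr
  exact hR y hy

theorem gaussMeasure_pos {σ : ℝ} (hσ : 0 < σ) {s : Set E3} (hs : volume s ≠ 0) :
    0 < gaussMeasure σ s := by
  rw [pos_iff_ne_zero, Ne, gaussMeasure, withDensity_apply_eq_zero' (by fun_prop)]
  have hdens : ∀ x : E3, 0 < (2 * Real.pi * σ) ^ (-(3:ℝ)/2) * Real.exp (-‖x‖ ^ 2 / (2 * σ)) :=
    fun x => by positivity
  simpa [hdens] using hs

theorem gaussMeasure_perturbCube_le {σ p : ℝ} (hσ : 0 < σ) (hp : 0 < p) (j : Fin 3 → ℤ) :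
    gaussMeasure σ (perturbCube j) ≤ ENNReal.ofReal ((2 * Real.pi * σ) ^ (-(3:ℝ)/2)) *
      ENNReal.ofReal (Real.exp (-(1 / (8 * σ * p)) * ‖latt j‖ ^ 2)) ^ p := by
  have hbound := gaussMeasure_le_of_le_norm_sq hσ (measurableSet_perturbCube j)
    (R := ‖latt j‖ ^ 2 / 4) fun y hy => by linarith [norm_latt_sq_le_of_mem_perturbCube hy]
  rw [ENNReal.ofReal_rpow_of_nonneg (Real.exp_pos _).le hp.le, ← Real.exp_mul,
    ← ENNReal.ofReal_mul (by positivity)]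
  refine hbound.trans_eq ?_
  rw [volume_perturbCube, mul_one]
  congr 3
  field_simp
  ring

theorem tsum_exp_neg_mul_norm_latt_sq_ne_top {c : ℝ} (hc : 0 < c) :
    ∑' j : Fin 3 → ℤ, ENNReal.ofReal (Real.exp (-c * ‖latt j‖ ^ 2)) ≠ ⊤ := by
  simpa only [norm_latt_sq_eq] using tsum_exp_neg_mul_sum_sq_ne_top hc 3

theorem X0_eq_tsum_indicator {Ω : Type*} (r : (Fin 3 → ℤ) → Ω → E3) (ω : Ω) :
    X0 r ω = ∑' j, (r j ⁻¹' perturbCube j).indicator 1 ω := by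
  rw [X0, ← ENNReal.tsum_set_one]
  exact tsum_subtype _ 1

theorem natCast_card_le_X0 {Ω : Type*} (r : (Fin 3 → ℤ) → Ω → E3) {ω : Ω}
    {F : Finset (Fin 3 → ℤ)} (hF : ∀ j ∈ F, latt j + r j ω ∈ Wcube) :
    (F.card : ℝ≥0∞) ≤ X0 r ω := by
  have h : (F.card : ℕ∞) ≤ {j | latt j + r j ω ∈ Wcube}.encard := by
    rw [← Set.encard_coe_eq_coe_finsetCard]
    exact Set.encard_le_encard hF
  rw [X0]
  exact_mod_cast ENat.toENNReal_le.2 h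

/-- **Gaussian perturbations I.** If the `r_j` are independent, each with the
Gaussian law of variance `σ > 0`, then `X₀ ∈ L^p(Ω)` for every `1 ≤ p < ∞`, but
`X₀ ∉ L^∞(Ω)`: for every `N ≥ 1` one has `P(X₀ ≥ N) > 0`. -/
theorem gaussian_X0_in_all_Lp_not_Linfty
    (σ : ℝ) (hσ : 0 < σ)
    {Ω : Type*} [MeasurableSpace Ω] (P : Measure Ω) [IsProbabilityMeasure P]
    (r : (Fin 3 → ℤ) → Ω → E3) (hmeas : ∀ j, Measurable (r j))
    (hindep : iIndepFun r P)
    (hlaw : ∀ j, P.map (r j) = gaussMeasure σ) :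
    (∀ p : ℝ, 1 ≤ p → ∫⁻ ω, X0 r ω ^ p ∂P < ⊤) ∧
      ∀ N : ℕ, 1 ≤ N → 0 < P {ω | (N : ℝ≥0∞) ≤ X0 r ω} := by
  have hA : ∀ j, MeasurableSet (r j ⁻¹' perturbCube j) :=
    fun j => hmeas j (measurableSet_perturbCube j)
  have hPA : ∀ j, P (r j ⁻¹' perturbCube j) = gaussMeasure σ (perturbCube j) := fun j => by
    rw [← Measure.map_apply (hmeas j) (measurableSet_perturbCube j), hlaw j]
  refine ⟨fun p hp => ?_, fun N _ => ?_⟩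
  · have hmoment := lintegral_tsum_indicator_rpow_le P hA
      (w := fun j => ENNReal.ofReal (Real.exp (-(1 / (8 * σ * p)) * ‖latt j‖ ^ 2)))
      (fun j => by simp [Real.exp_pos]) (fun _ => ENNReal.ofReal_ne_top) hp
      fun j => (hPA j).trans_le (gaussMeasure_perturbCube_le hσ (by linarith) j)
    simp_rw [X0_eq_tsum_indicator]
    exact hmoment.trans_lt <| ENNReal.mul_lt_top ENNReal.ofReal_lt_top <|
      ENNReal.rpow_lt_top_of_nonneg (by linarith)
        (tsum_exp_neg_mul_norm_latt_sq_ne_top (by positivity))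
  · obtain ⟨F, hF⟩ := Infinite.exists_subset_card_eq (Fin 3 → ℤ) N
    calc 0 < ∏ j ∈ F, P (r j ⁻¹' perturbCube j) :=
          CanonicallyOrderedAdd.prod_pos.2 fun j _ => (hPA j).symm ▸
            gaussMeasure_pos hσ (by simp [volume_perturbCube])
      _ = P (⋂ j ∈ F, r j ⁻¹' perturbCube j) := (hindep.meas_biInter fun j _ =>
          ⟨perturbCube j, measurableSet_perturbCube j, rfl⟩).symm
      _ ≤ P {ω | (N : ℝ≥0∞) ≤ X0 r ω} := measure_mono fun ω hω => by
          rw [← hF]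
          exact natCast_card_le_X0 r fun j hj => Set.mem_iInter₂.1 hω j hj
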